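/- Let n ≥ 1, x ∈ ℝⁿ, and let B_K((x,u), 1) = {(x',u') : d_K((x,u),(x',u')) < 1} where d_K((x,u),(x',u')) = (√((|x|²+|x'|²)² + (2|u−u'|)²) − 2⟨x,x'⟩)^{1/2}. Then the Lebesgue measure of B_K((x,u),1) satisfies (1/8)·(1+|x|)·B(n/2, 3/2)·|S^{n−1}| ≤ |B_K((x,u),1)| ≤ (1+|x|)·B(n/2, 3/2)·|S^{n−1}|, where B is the Beta function and |S^{n−1}| = 2π^{n/2}/Γ(n/2) is the surface area of the unit sphere in ℝⁿ. -/

import Mathlib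

/-!
Squaring twice, `dK (x, u) (y, t) < 1` iff `4 (t - u)² < (1 - ‖y - x‖²) (1 + ‖y + x‖²)`, so the
fibre of the ball over `y` is an interval of length `√((1 - ‖y - x‖²) (1 + ‖y + x‖²))` and, after
`z = y - x`, the volume is `∫ √(1 - ‖z‖²) √(1 + ‖z + 2x‖²) dz`. For `‖z‖ ≤ 1` the second factor lies
between `(1 + ‖x‖) / 4` and `2 (1 + ‖x‖)`, while `∫ √(1 - ‖z‖²) dz` is half the volume of the unit
ball of `ℝⁿ⁺¹`, i.e. `B(n/2, 3/2) |Sⁿ⁻¹| / 2`.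
-/

open scoped RealInnerProductSpace
open MeasureTheory Real

noncomputable def dK {n : ℕ} (g g' : EuclideanSpace ℝ (Fin n) × ℝ) : ℝ :=
  Real.sqrt (Real.sqrt ((‖g.1‖ ^ 2 + ‖g'.1‖ ^ 2) ^ 2 + (2 * |g.2 - g'.2|) ^ 2)
    - 2 * ⟪g.1, g'.1⟫)

open Module

lemma prod_volume_setOf_sq_sub_lt {α : Type*} [MeasurableSpace α] (μ : Measure α) [SFinite μ]
    {f : α → ℝ} (hf : Measurable f) (u : ℝ) :
    μ.prod volume {p : α × ℝ | (p.2 - u) ^ 2 < f p.1} = ∫⁻ a, ENNReal.ofReal (2 * √(f a)) ∂μ := by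
  rw [Measure.prod_apply (measurableSet_lt (by fun_prop) (by fun_prop))]
  refine lintegral_congr fun a => ?_
  have hsection : Prod.mk a ⁻¹' {p : α × ℝ | (p.2 - u) ^ 2 < f p.1} =
      Set.Ioo (u - √(f a)) (u + √(f a)) := by
    ext t
    simp only [Set.mem_preimage, Set.mem_ofPred_eq, Set.mem_Ioo, sq_lt]
    constructor <;> rintro ⟨h₁, h₂⟩ <;> constructor <;> linarith
  rw [hsection, Real.volume_Ioo]
  ring_nf

lemma lintegral_ofReal_const_mul {α : Type*} [MeasurableSpace α] {μ : Measure α} {c : ℝ}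
    (hc : 0 ≤ c) (f : α → ℝ) :
    ∫⁻ a, ENNReal.ofReal (c * f a) ∂μ = ENNReal.ofReal c * ∫⁻ a, ENNReal.ofReal (f a) ∂μ := by
  simp_rw [ENNReal.ofReal_mul hc]
  exact lintegral_const_mul' _ _ ENNReal.ofReal_ne_top

section InnerProductSpace

variable {U : Type*} [NormedAddCommGroup U] [InnerProductSpace ℝ U] [FiniteDimensional ℝ U]
  [MeasurableSpace U] [BorelSpace U]

lemma volume_norm_sq_add_sq_lt_one :
    volume {p : U × ℝ | ‖p.1‖ ^ 2 + p.2 ^ 2 < 1} =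
      ENNReal.ofReal (√π ^ (finrank ℝ U + 1) / Gamma ((finrank ℝ U + 1 : ℕ) / 2 + 1)) := by
  have hdim : finrank ℝ (WithLp 2 (U × ℝ)) = finrank ℝ U + 1 := by
    rw [(WithLp.linearEquiv 2 ℝ (U × ℝ)).finrank_eq, finrank_prod, finrank_self]
  have hball := InnerProductSpace.volume_ball (0 : WithLp 2 (U × ℝ)) 1
  rw [← (WithLp.volume_preserving_toLp U ℝ).measure_preimage
    measurableSet_ball.nullMeasurableSet, hdim, ENNReal.ofReal_one, one_pow, one_mul] at hball
  rw [← hball]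
  congr 1
  ext p
  rw [Set.mem_preimage, mem_ball_zero_iff, ← sq_lt_one_iff₀ (norm_nonneg _),
    WithLp.prod_norm_sq_eq_of_L2, Real.norm_eq_abs, sq_abs]
  rfl

lemma lintegral_sqrt_one_sub_norm_sq :
    ∫⁻ y : U, ENNReal.ofReal √(1 - ‖y‖ ^ 2) =
      ENNReal.ofReal (√π ^ (finrank ℝ U + 1) / Gamma ((finrank ℝ U + 1 : ℕ) / 2 + 1) / 2) := by
  have hvol := prod_volume_setOf_sq_sub_lt (volume : Measure U) (f := fun y => 1 - ‖y‖ ^ 2)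
    (by fun_prop) 0
  simp only [sub_zero, ← Measure.volume_eq_prod] at hvol
  rw [show {p : U × ℝ | p.2 ^ 2 < 1 - ‖p.1‖ ^ 2} = {p | ‖p.1‖ ^ 2 + p.2 ^ 2 < 1} by
    ext; simp only [Set.mem_ofPred_eq]; constructor <;> intro <;> linarith,
    volume_norm_sq_add_sq_lt_one, lintegral_ofReal_const_mul zero_le_two,
    ENNReal.ofReal_ofNat] at hvol
  rw [ENNReal.ofReal_div_of_pos two_pos, ENNReal.ofReal_ofNat,
    ENNReal.eq_div_iff two_ne_zero ENNReal.ofNat_ne_top, hvol]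

end InnerProductSpace

-- `(1 + a)² - A² = (1 - (A - a)) (1 + (A + a))`, and the second factor is positive.
lemma sqrt_sqrt_sub_lt_one_iff {A a s : ℝ} (ha : |a| ≤ A) (hs : 0 ≤ s) :
    √(√(A ^ 2 + 4 * s) - a) < 1 ↔ 4 * s < (1 - (A - a)) * (1 + (A + a)) := by
  obtain ⟨ha₁, ha₂⟩ := abs_le.mp ha
  rw [Real.sqrt_lt' one_pos, one_pow, sub_lt_iff_lt_add']
  constructor
  · intro h
    have hpos : 0 < a + 1 := (Real.sqrt_nonneg _).trans_lt h
    nlinarith [(Real.sqrt_lt' hpos).mp h]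
  · intro h
    have hprod : 0 < (1 - (A - a)) * (1 + (A + a)) := by linarith
    have hpos : 0 < a + 1 := by
      linarith [(pos_iff_pos_of_mul_pos hprod).mpr (by linarith : 0 < 1 + (A + a))]
    rw [Real.sqrt_lt' hpos]
    nlinarith

lemma dK_lt_one_iff {n : ℕ} (x y : EuclideanSpace ℝ (Fin n)) (u t : ℝ) :
    dK (x, u) (y, t) < 1 ↔ (t - u) ^ 2 < (1 - ‖y - x‖ ^ 2) * (1 + ‖y + x‖ ^ 2) / 4 := by
  have hinner : |2 * ⟪x, y⟫| ≤ ‖x‖ ^ 2 + ‖y‖ ^ 2 := by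
    rw [abs_mul, abs_two]
    nlinarith [abs_real_inner_le_norm x y, sq_nonneg (‖x‖ - ‖y‖)]
  have hvert : (2 * |u - t|) ^ 2 = 4 * (t - u) ^ 2 := by rw [mul_pow, sq_abs]; ring
  change √(√((‖x‖ ^ 2 + ‖y‖ ^ 2) ^ 2 + (2 * |u - t|) ^ 2) - 2 * ⟪x, y⟫) < 1 ↔ _
  rw [hvert, sqrt_sqrt_sub_lt_one_iff hinner (sq_nonneg _), norm_sub_sq_real, norm_add_sq_real,
    real_inner_comm y x, lt_div_iff₀' four_pos]
  constructor <;> intro h <;> linarith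

lemma volume_setOf_dK_lt_one {n : ℕ} (x : EuclideanSpace ℝ (Fin n)) (u : ℝ) :
    volume {p : EuclideanSpace ℝ (Fin n) × ℝ | dK (x, u) p < 1} =
      ∫⁻ z, ENNReal.ofReal (√(1 - ‖z‖ ^ 2) * √(1 + ‖z + (2 : ℝ) • x‖ ^ 2)) := by
  have hset : {p : EuclideanSpace ℝ (Fin n) × ℝ | dK (x, u) p < 1} =
      {p | (p.2 - u) ^ 2 < (1 - ‖p.1 - x‖ ^ 2) * (1 + ‖p.1 + x‖ ^ 2) / 4} :=
    Set.ext fun p => dK_lt_one_iff x p.1 u p.2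
  rw [hset, Measure.volume_eq_prod,
    prod_volume_setOf_sq_sub_lt _ (f := fun y => (1 - ‖y - x‖ ^ 2) * (1 + ‖y + x‖ ^ 2) / 4)
      (by fun_prop), ← lintegral_add_right_eq_self _ x]
  refine lintegral_congr fun z => ?_
  have hsqrt4 : √4 = (2 : ℝ) := by
    rw [show (4 : ℝ) = 2 ^ 2 by norm_num, Real.sqrt_sq zero_le_two]
  rw [add_sub_cancel_right, add_assoc, ← two_smul ℝ x, Real.sqrt_div' _ zero_le_four, hsqrt4,
    mul_div_cancel₀ _ two_ne_zero, Real.sqrt_mul' _ (by positivity)]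

section NormedSpace

variable {E : Type*} [NormedAddCommGroup E] [NormedSpace ℝ E]

lemma sqrt_one_add_norm_add_two_smul_sq_mem_Icc {x z : E} (hz : ‖z‖ ≤ 1) :
    √(1 + ‖z + (2 : ℝ) • x‖ ^ 2) ∈ Set.Icc ((1 + ‖x‖) / 4) (2 * (1 + ‖x‖)) := by
  have hdev : |‖z + (2 : ℝ) • x‖ - 2 * ‖x‖| ≤ 1 := by
    have := abs_norm_sub_norm_le (z + (2 : ℝ) • x) ((2 : ℝ) • x)
    rw [add_sub_cancel_right, norm_smul, Real.norm_two] at this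
    exact this.trans hz
  obtain ⟨hlo, hhi⟩ := abs_le.mp hdev
  have hx := norm_nonneg x
  have hr := norm_nonneg (z + (2 : ℝ) • x)
  constructor
  · rw [Real.le_sqrt (by positivity) (by positivity)]
    rcases le_or_gt ‖x‖ 1 with h | h <;> nlinarith
  · rw [Real.sqrt_le_left (by positivity)]
    nlinarith

lemma sqrt_one_sub_norm_sq_mul_mem_Icc (x z : E) :
    √(1 - ‖z‖ ^ 2) * √(1 + ‖z + (2 : ℝ) • x‖ ^ 2) ∈
      Set.Icc ((1 + ‖x‖) / 4 * √(1 - ‖z‖ ^ 2)) (2 * (1 + ‖x‖) * √(1 - ‖z‖ ^ 2)) := by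
  rcases le_or_gt ‖z‖ 1 with hz | hz
  · obtain ⟨hlo, hhi⟩ := sqrt_one_add_norm_add_two_smul_sq_mem_Icc (x := x) hz
    have hs := Real.sqrt_nonneg (1 - ‖z‖ ^ 2)
    constructor <;> nlinarith
  · have hs : √(1 - ‖z‖ ^ 2) = 0 := Real.sqrt_eq_zero'.mpr (by nlinarith)
    simp [hs]

end NormedSpace

lemma beta_mul_sphere_area {n : ℕ} (hn : 1 ≤ n) :
    Gamma (n / 2) * Gamma (3 / 2) / Gamma (n / 2 + 3 / 2) * (2 * π ^ ((n : ℝ) / 2) / Gamma (n / 2))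
      = √π ^ (n + 1) / Gamma ((n + 1 : ℕ) / 2 + 1) := by
  have hΓ : Gamma (n / 2) ≠ 0 := (Gamma_pos_of_pos (by positivity)).ne'
  have hΓ₃₂ : Gamma (3 / 2) = √π / 2 := by
    rw [show (3 / 2 : ℝ) = 1 / 2 + 1 by norm_num, Gamma_add_one (by norm_num), Gamma_one_half_eq]
    ring
  rw [hΓ₃₂, rpow_div_two_eq_sqrt _ pi_pos.le, rpow_natCast, pow_succ, Nat.cast_succ,
    show ((n : ℝ) + 1) / 2 + 1 = n / 2 + 3 / 2 by ring]
  field_simp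

theorem volume_BK (n : ℕ) (hn : 1 ≤ n) (x : EuclideanSpace ℝ (Fin n)) (u : ℝ) :
    ENNReal.ofReal ((1 / 8) * (1 + ‖x‖) *
        (Real.Gamma (n / 2) * Real.Gamma (3 / 2) / Real.Gamma (n / 2 + 3 / 2)) *
        (2 * Real.pi ^ ((n : ℝ) / 2) / Real.Gamma (n / 2))) ≤
      volume {p : EuclideanSpace ℝ (Fin n) × ℝ | dK (x, u) p < 1} ∧
    volume {p : EuclideanSpace ℝ (Fin n) × ℝ | dK (x, u) p < 1} ≤
      ENNReal.ofReal ((1 + ‖x‖) *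
        (Real.Gamma (n / 2) * Real.Gamma (3 / 2) / Real.Gamma (n / 2 + 3 / 2)) *
        (2 * Real.pi ^ ((n : ℝ) / 2) / Real.Gamma (n / 2))) := by
  have hJ := lintegral_sqrt_one_sub_norm_sq (U := EuclideanSpace ℝ (Fin n))
  rw [finrank_euclideanSpace_fin, ← beta_mul_sphere_area hn] at hJ
  rw [volume_setOf_dK_lt_one]
  constructor
  · calc _ = ENNReal.ofReal ((1 + ‖x‖) / 4) * ∫⁻ z, ENNReal.ofReal √(1 - ‖z‖ ^ 2) := by
          rw [hJ, ← ENNReal.ofReal_mul (by positivity)]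
          ring_nf
      _ = ∫⁻ z, ENNReal.ofReal ((1 + ‖x‖) / 4 * √(1 - ‖z‖ ^ 2)) :=
          (lintegral_ofReal_const_mul (by positivity) _).symm
      _ ≤ _ := lintegral_mono fun z =>
          ENNReal.ofReal_le_ofReal (sqrt_one_sub_norm_sq_mul_mem_Icc x z).1
  · calc _ ≤ ∫⁻ z, ENNReal.ofReal (2 * (1 + ‖x‖) * √(1 - ‖z‖ ^ 2)) := lintegral_mono fun z =>
          ENNReal.ofReal_le_ofReal (sqrt_one_sub_norm_sq_mul_mem_Icc x z).2
      _ = ENNReal.ofReal (2 * (1 + ‖x‖)) * ∫⁻ z, ENNReal.ofReal √(1 - ‖z‖ ^ 2) :=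
          lintegral_ofReal_const_mul (by positivity) _
      _ = _ := by
          rw [hJ, ← ENNReal.ofReal_mul (by positivity)]
          ring_nf
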